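/- arXiv:1905.05017 — 4 statements merged into one kernel-verified Lean document; each statement's English description precedes it below -/
import Mathlib

section
/- For all t ≥ 1 and all i ∈ ℤ, the spin at site i after t steps of the Kac dynamics satisfies 2·(φ^t(x,y))₁(i) − 1 = (1−2y(i−1))·(1−2y(i−2))⋯(1−2y(i−t))·(2x(i−t)−1). -/
/-! In the `±1` encoding `s ↦ 2 s - 1`, the update `a + b - 2ab` (addition mod 2) becomes
multiplication: `2 (a + b - 2ab) - 1 = (1 - 2b)(2a - 1)`. Since the environment `y` is never
updated, each step multiplies the spin signal, shifted one site to the right, by `1 - 2 y(i-1)`. -/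

/-- The Kac chain dynamics. -/
def kacPhi (p : (ℤ → ℤ) × (ℤ → ℤ)) : (ℤ → ℤ) × (ℤ → ℤ) :=
  (fun i => p.1 (i - 1) + p.2 (i - 1) - 2 * p.1 (i - 1) * p.2 (i - 1), p.2)

@[simp]
lemma kacPhi_snd (p : (ℤ → ℤ) × (ℤ → ℤ)) : (kacPhi p).2 = p.2 := rfl

lemma two_mul_kacPhi_fst_sub_one (p : (ℤ → ℤ) × (ℤ → ℤ)) (i : ℤ) :
    2 * (kacPhi p).1 i - 1 = (1 - 2 * p.2 (i - 1)) * (2 * p.1 (i - 1) - 1) := by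
  simp only [kacPhi]
  ring

lemma two_mul_iterate_kacPhi_fst_sub_one (p : (ℤ → ℤ) × (ℤ → ℤ)) (t : ℕ) (i : ℤ) :
    2 * (kacPhi^[t] p).1 i - 1 =
      (∏ k ∈ Finset.Icc 1 t, (1 - 2 * p.2 (i - (k : ℤ)))) * (2 * p.1 (i - (t : ℤ)) - 1) := by
  induction t generalizing p with
  | zero => simp
  | succ t ih =>
    rw [Function.iterate_succ_apply, ih, Finset.prod_Icc_succ_top (by omega), mul_assoc,
      two_mul_kacPhi_fst_sub_one, kacPhi_snd]
    push_cast
    ring_nf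

theorem kacPhi_spin_formula_general (x y : ℤ → ℤ) (t : ℕ) (i : ℤ) :
    2 * (kacPhi^[t] (x, y)).1 i - 1 =
      (∏ k ∈ Finset.Icc 1 t, (1 - 2 * y (i - (k : ℤ)))) * (2 * x (i - (t : ℤ)) - 1) :=
  two_mul_iterate_kacPhi_fst_sub_one (x, y) t i

/-- for all `t ≥ 1` and all sites `i`, the spin at site `i` after `t` steps
satisfies `2·(φ^t(x,y))₁(i) − 1 = ∏_{k=1}^{t} (1−2y(i−k)) · (2x(i−t)−1)`. -/
theorem kacPhi_spin_formula (x y : ℤ → ℤ) (t : ℕ) (ht : 1 ≤ t) (i : ℤ) :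
    2 * (kacPhi^[t] (x, y)).1 i - 1 =
      (∏ k ∈ Finset.Icc 1 t, (1 - 2 * y (i - (k : ℤ)))) * (2 * x (i - (t : ℤ)) - 1) :=
  kacPhi_spin_formula_general x y t i
end

section
/- Under the product Bernoulli measure μ_m with spin mean m₀ and scatterer density m₁, for all t with 0 ≤ t ≤ T and T ≤ 2N, the variance of the block-averaged magnetization at time t satisfies Var[m₀^N ∘ φ^t] ≤ (1 + 2m₀²t)/(2N+1). -/
open MeasureTheory ProbabilityTheory

/-- Block-averaged magnetization over the `2N+1` sites centered at the origin. -/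
noncomputable def m0Avg (N : ℕ) (p : (ℤ → ℤ) × (ℤ → ℤ)) : ℝ :=
  (∑ i ∈ Finset.Icc (-(N : ℤ)) (N : ℤ), (2 * (p.1 i : ℝ) - 1)) / (2 * (N : ℝ) + 1)

/-- The family of all coordinate functions (spins and scatterers). -/
def coordFun : ℤ ⊕ ℤ → ((ℤ → ℤ) × (ℤ → ℤ)) → ℤ :=
  Sum.elim (fun i p => p.1 i) (fun i p => p.2 i)

/-! Under the Kac dynamics the spin at site `i` after `t` steps is the initial spin at `i - t`
times the scatterer signs `±1` met on the way: `σₜ(i) = s(i - t) ∏_{i - t ≤ j < i} w(j)`.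
Under `μ_m` all these signs are independent `±1` variables, with means `m₀` and `r = 1 - 2m₁`.
Scatterer signs shared by the light cones of `i ≠ j` square to one, so
`Cov(σₜ(i), σₜ(j)) = m₀² (r^(2(t - k)) - r^(2t))`, where `k` is the overlap of the cones.
Hence the covariance is at most `m₀²` off the diagonal, at most `1` on it, and vanishes once
`|i - j| ≥ t`; summing over the `2N + 1` sites gives `Var(∑ σₜ(i)) ≤ (2N + 1)(1 + 2tm₀²)`. -/

open Finset

section Bernoulli

variable {Ω : Type*} [MeasurableSpace Ω] {μ : Measure Ω} [IsProbabilityMeasure μ]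
  {f : Ω → ℤ} {a : ℝ}

lemma ae_eq_zero_or_eq_one_of_measure_eq (hf : Measurable f) (ha : a ∈ Set.Icc 0 1)
    (h1 : μ {ω | f ω = 1} = ENNReal.ofReal a) (h0 : μ {ω | f ω = 0} = ENNReal.ofReal (1 - a)) :
    ∀ᵐ ω ∂μ, f ω = 0 ∨ f ω = 1 := by
  have hdisj : Disjoint {ω | f ω = 0} {ω | f ω = 1} :=
    Set.disjoint_left.mpr fun ω h0 h1 => by simp_all
  have hmeas : MeasurableSet {ω | f ω = 0 ∨ f ω = 1} :=
    (hf (measurableSet_singleton 0)).union (hf (measurableSet_singleton 1))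
  rw [ae_iff_measure_eq hmeas.nullMeasurableSet, measure_univ, Set.ofPred_or,
    measure_union hdisj (hf (measurableSet_singleton 1)), h0, h1,
    ← ENNReal.ofReal_add (by linarith [ha.2]) ha.1, sub_add_cancel, ENNReal.ofReal_one]

lemma integral_comp_eq_of_measure_eq (hf : Measurable f) (ha : a ∈ Set.Icc 0 1)
    (h1 : μ {ω | f ω = 1} = ENNReal.ofReal a) (h0 : μ {ω | f ω = 0} = ENNReal.ofReal (1 - a))
    (g : ℤ → ℝ) :
    ∫ ω, g (f ω) ∂μ = a * g 1 + (1 - a) * g 0 := by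
  have hs1 : MeasurableSet {ω | f ω = 1} := hf (measurableSet_singleton 1)
  have hs0 : MeasurableSet {ω | f ω = 0} := hf (measurableSet_singleton 0)
  have hae : (fun ω => g (f ω)) =ᵐ[μ] fun ω =>
      {ω | f ω = 1}.indicator (fun _ => g 1) ω + {ω | f ω = 0}.indicator (fun _ => g 0) ω := by
    filter_upwards [ae_eq_zero_or_eq_one_of_measure_eq hf ha h1 h0] with ω hω
    rcases hω with h | h <;> simp [h]
  rw [integral_congr_ae hae, integral_add ((integrable_const _).indicator hs1)
      ((integrable_const _).indicator hs0), integral_indicator_const _ hs1,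
    integral_indicator_const _ hs0, measureReal_def, measureReal_def, h1, h0,
    ENNReal.toReal_ofReal ha.1, ENNReal.toReal_ofReal (by linarith [ha.2]), smul_eq_mul,
    smul_eq_mul]

end Bernoulli

lemma ProbabilityTheory.iIndepFun.integral_finset_prod_eq_prod_integral {Ω ι : Type*}
    [MeasurableSpace Ω] {μ : Measure Ω} {X : ι → Ω → ℝ} (hX : iIndepFun X μ)
    (mX : ∀ i, AEStronglyMeasurable (X i) μ) (s : Finset ι) :
    ∫ ω, ∏ i ∈ s, X i ω ∂μ = ∏ i ∈ s, ∫ ω, X i ω ∂μ := by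
  have := (hX.precomp (g := ((↑) : s → ι)) Subtype.val_injective).integral_fun_prod_eq_prod_integral
    fun i => mX i
  convert this using 1
  · exact integral_congr_ae (.of_forall fun ω => (s.prod_coe_sort fun i => X i ω).symm)
  · exact (s.prod_coe_sort _).symm

lemma sum_le_of_eq_zero_of_le_abs_sub {s : Finset ℤ} {f : ℤ → ℝ} {i : ℤ} {a b : ℝ} {t : ℕ}
    (hi : i ∈ s) (hb : 0 ≤ b) (hfi : f i ≤ a) (hle : ∀ j ≠ i, f j ≤ b)
    (hfar : ∀ j ≠ i, (t : ℤ) ≤ |j - i| → f j = 0) :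
    ∑ j ∈ s, f j ≤ a + 2 * t * b := by
  set near := (s.erase i).filter fun j => |j - i| < t
  have hnear : ∑ j ∈ s.erase i, f j = ∑ j ∈ near, f j :=
    (sum_filter_of_ne fun j hj hfj =>
      not_le.mp fun hle => hfj (hfar j (ne_of_mem_erase hj) hle)).symm
  have hcard : (#near : ℝ) ≤ 2 * t := by
    have : near ⊆ Ioo (i - t) (i + t) := fun j hj => by
      have := (mem_filter.mp hj).2
      rw [abs_lt] at this
      simp only [mem_Ioo]
      omega
    have := (card_le_card this).trans (by rw [Int.card_Ioo]; omega : #(Ioo (i - t) (i + t)) ≤ 2 * t)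
    exact_mod_cast this
  calc ∑ j ∈ s, f j = f i + ∑ j ∈ near, f j := by rw [← add_sum_erase s f hi, hnear]
    _ ≤ a + #near * b := by
        gcongr
        exact (sum_le_card_nsmul _ _ _ fun j hj =>
          hle j (ne_of_mem_erase (mem_filter.mp hj).1)).trans_eq (nsmul_eq_mul _ _)
    _ ≤ a + 2 * t * b := by gcongr

lemma variance_sum_le_of_covariance_le {Ω : Type*} [MeasurableSpace Ω] {μ : Measure Ω}
    [IsFiniteMeasure μ] {X : ℤ → Ω → ℝ} (s : Finset ℤ) {a b : ℝ} {t : ℕ}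
    (hX : ∀ i, MemLp (X i) 2 μ) (hb : 0 ≤ b) (hvar : ∀ i, Var[X i; μ] ≤ a)
    (hcov : ∀ i j, i ≠ j → cov[X i, X j; μ] ≤ b)
    (hfar : ∀ i j, i ≠ j → (t : ℤ) ≤ |j - i| → cov[X i, X j; μ] = 0) :
    Var[fun ω => ∑ i ∈ s, X i ω; μ] ≤ #s * (a + 2 * t * b) := by
  rw [variance_fun_sum' fun i _ => hX i, ← nsmul_eq_mul]
  refine sum_le_card_nsmul _ _ _ fun i hi => sum_le_of_eq_zero_of_le_abs_sub hi hb ?_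
    (fun j hj => hcov i j hj.symm) (fun j hj => hfar i j hj.symm)
  rw [covariance_self (hX i).aemeasurable]
  exact hvar i

noncomputable def spin (i : ℤ) (p : (ℤ → ℤ) × (ℤ → ℤ)) : ℝ := 2 * (p.1 i : ℝ) - 1

noncomputable def scatterSign (j : ℤ) (p : (ℤ → ℤ) × (ℤ → ℤ)) : ℝ := 1 - 2 * (p.2 j : ℝ)

noncomputable def evolvedSpin (t : ℕ) (i : ℤ) (p : (ℤ → ℤ) × (ℤ → ℤ)) : ℝ :=
  spin (i - t) p * ∏ j ∈ Ico (i - t) i, scatterSign j p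

lemma spin_kacPhi (i : ℤ) (p : (ℤ → ℤ) × (ℤ → ℤ)) :
    spin i (kacPhi p) = spin (i - 1) p * scatterSign (i - 1) p := by
  simp only [spin, scatterSign, kacPhi]
  push_cast
  ring

lemma scatterSign_kacPhi_iterate (t : ℕ) (j : ℤ) (p : (ℤ → ℤ) × (ℤ → ℤ)) :
    scatterSign j (kacPhi^[t] p) = scatterSign j p := by
  induction t with
  | zero => rfl
  | succ t ih => rw [Function.iterate_succ_apply', ← ih]; rfl

lemma evolvedSpin_succ (t : ℕ) (i : ℤ) (p : (ℤ → ℤ) × (ℤ → ℤ)) :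
    evolvedSpin (t + 1) i p = evolvedSpin t (i - 1) p * scatterSign (i - 1) p := by
  have hIco : Ico (i - 1 - t) i = insert (i - 1) (Ico (i - 1 - t) (i - 1)) := by
    ext j
    simp only [mem_Ico, mem_insert]
    omega
  rw [evolvedSpin, evolvedSpin, show i - ↑(t + 1) = i - 1 - t by push_cast; ring, hIco,
    prod_insert (by simp)]
  ring

lemma spin_kacPhi_iterate (t : ℕ) (i : ℤ) (p : (ℤ → ℤ) × (ℤ → ℤ)) :
    spin i (kacPhi^[t] p) = evolvedSpin t i p := by
  induction t generalizing i with
  | zero => simp [evolvedSpin]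
  | succ t ih =>
    rw [Function.iterate_succ_apply', spin_kacPhi, ih, scatterSign_kacPhi_iterate,
      evolvedSpin_succ]

lemma measurable_fst_apply (i : ℤ) : Measurable fun p : (ℤ → ℤ) × (ℤ → ℤ) => p.1 i :=
  (measurable_pi_apply i).comp measurable_fst

lemma measurable_snd_apply (j : ℤ) : Measurable fun p : (ℤ → ℤ) × (ℤ → ℤ) => p.2 j :=
  (measurable_pi_apply j).comp measurable_snd

lemma measurable_spin (i : ℤ) : Measurable (spin i) :=
  (measurable_of_countable fun z : ℤ => 2 * (z : ℝ) - 1).comp (measurable_fst_apply i)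

lemma measurable_scatterSign (j : ℤ) : Measurable (scatterSign j) :=
  (measurable_of_countable fun z : ℤ => 1 - 2 * (z : ℝ)).comp (measurable_snd_apply j)

lemma measurable_evolvedSpin (t : ℕ) (i : ℤ) : Measurable (evolvedSpin t i) :=
  (measurable_spin _).mul (Finset.measurable_prod _ fun j _ => measurable_scatterSign j)

lemma disjoint_Ico_of_le_abs_sub {i j : ℤ} {t : ℕ} (h : (t : ℤ) ≤ |j - i|) :
    Disjoint (Ico (i - t) i) (Ico (j - t) j) := by
  rw [Finset.disjoint_left]
  intro k hki hkj
  simp only [mem_Ico] at hki hkj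
  rw [le_abs] at h
  omega

/-- The measure `μ_m`. -/
structure IsKacMeasure (μ : Measure ((ℤ → ℤ) × (ℤ → ℤ))) (m₀ m₁ : ℝ) : Prop where
  indep : iIndepFun coordFun μ
  spinMean_mem : m₀ ∈ Set.Icc (-1 : ℝ) 1
  density_mem : m₁ ∈ Set.Icc (0 : ℝ) 1
  measure_fst_eq_one : ∀ i : ℤ, μ {p | p.1 i = 1} = ENNReal.ofReal ((1 + m₀) / 2)
  measure_fst_eq_zero : ∀ i : ℤ, μ {p | p.1 i = 0} = ENNReal.ofReal ((1 - m₀) / 2)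
  measure_snd_eq_one : ∀ i : ℤ, μ {p | p.2 i = 1} = ENNReal.ofReal m₁
  measure_snd_eq_zero : ∀ i : ℤ, μ {p | p.2 i = 0} = ENNReal.ofReal (1 - m₁)

namespace IsKacMeasure

variable {μ : Measure ((ℤ → ℤ) × (ℤ → ℤ))} {m₀ m₁ : ℝ}

lemma half_one_add_spinMean_mem (hμ : IsKacMeasure μ m₀ m₁) :
    (1 + m₀) / 2 ∈ Set.Icc (0 : ℝ) 1 :=
  ⟨by linarith [hμ.spinMean_mem.1], by linarith [hμ.spinMean_mem.2]⟩

lemma measure_fst_eq_zero' (hμ : IsKacMeasure μ m₀ m₁) (i : ℤ) :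
    μ {p | p.1 i = 0} = ENNReal.ofReal (1 - (1 + m₀) / 2) := by
  rw [hμ.measure_fst_eq_zero i]
  ring_nf

lemma ae_sq_spin [IsProbabilityMeasure μ] (hμ : IsKacMeasure μ m₀ m₁) :
    ∀ᵐ p ∂μ, ∀ i, spin i p ^ 2 = 1 := by
  rw [ae_all_iff]
  intro i
  filter_upwards [ae_eq_zero_or_eq_one_of_measure_eq (measurable_fst_apply i)
    hμ.half_one_add_spinMean_mem (hμ.measure_fst_eq_one i) (hμ.measure_fst_eq_zero' i)] with p hp
  rcases hp with h | h <;> norm_num [spin, h]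

lemma ae_sq_scatterSign [IsProbabilityMeasure μ] (hμ : IsKacMeasure μ m₀ m₁) :
    ∀ᵐ p ∂μ, ∀ j, scatterSign j p ^ 2 = 1 := by
  rw [ae_all_iff]
  intro j
  filter_upwards [ae_eq_zero_or_eq_one_of_measure_eq (measurable_snd_apply j)
    hμ.density_mem (hμ.measure_snd_eq_one j) (hμ.measure_snd_eq_zero j)] with p hp
  rcases hp with h | h <;> norm_num [scatterSign, h]

lemma integral_spin [IsProbabilityMeasure μ] (hμ : IsKacMeasure μ m₀ m₁) (i : ℤ) :
    ∫ p, spin i p ∂μ = m₀ := by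
  have := integral_comp_eq_of_measure_eq (measurable_fst_apply i) hμ.half_one_add_spinMean_mem
    (hμ.measure_fst_eq_one i) (hμ.measure_fst_eq_zero' i) fun z => 2 * (z : ℝ) - 1
  simp only [spin, this]
  norm_num
  ring

lemma integral_scatterSign [IsProbabilityMeasure μ] (hμ : IsKacMeasure μ m₀ m₁) (j : ℤ) :
    ∫ p, scatterSign j p ∂μ = 1 - 2 * m₁ := by
  have := integral_comp_eq_of_measure_eq (measurable_snd_apply j) hμ.density_mem
    (hμ.measure_snd_eq_one j) (hμ.measure_snd_eq_zero j) fun z => 1 - 2 * (z : ℝ)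
  simp only [scatterSign, this]
  norm_num
  ring

lemma iIndepFun_sumElim_spin_scatterSign (hμ : IsKacMeasure μ m₀ m₁) :
    iIndepFun (Sum.elim spin scatterSign) μ := by
  have := hμ.indep.comp
    (Sum.elim (fun _ (z : ℤ) => 2 * (z : ℝ) - 1) (fun _ (z : ℤ) => 1 - 2 * (z : ℝ)))
    fun k => measurable_of_countable _
  convert this using 1
  funext k
  cases k <;> rfl

lemma integral_prod_spin_mul_prod_scatterSign [IsProbabilityMeasure μ]
    (hμ : IsKacMeasure μ m₀ m₁) (S T : Finset ℤ) :
    ∫ p, (∏ i ∈ S, spin i p) * ∏ j ∈ T, scatterSign j p ∂μ = m₀ ^ #S * (1 - 2 * m₁) ^ #T := by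
  have := hμ.iIndepFun_sumElim_spin_scatterSign.integral_finset_prod_eq_prod_integral
    (fun k => by cases k with
      | inl i => exact (measurable_spin i).aestronglyMeasurable
      | inr j => exact (measurable_scatterSign j).aestronglyMeasurable) (S.disjSum T)
  simp only [prod_disjSum, Sum.elim_inl, Sum.elim_inr] at this
  rw [this, prod_congr rfl fun i _ => hμ.integral_spin i,
    prod_congr rfl fun j _ => hμ.integral_scatterSign j, prod_const, prod_const]

variable [IsProbabilityMeasure μ]

lemma ae_sq_evolvedSpin (hμ : IsKacMeasure μ m₀ m₁) (t : ℕ) :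
    ∀ᵐ p ∂μ, ∀ i, evolvedSpin t i p ^ 2 = 1 := by
  filter_upwards [hμ.ae_sq_spin, hμ.ae_sq_scatterSign] with p hs hw i
  rw [evolvedSpin, mul_pow, hs, ← prod_pow]
  simp [hw]

lemma memLp_evolvedSpin (hμ : IsKacMeasure μ m₀ m₁) (t : ℕ) (i : ℤ) :
    MemLp (evolvedSpin t i) 2 μ :=
  .of_bound (measurable_evolvedSpin t i).aestronglyMeasurable 1 <| by
    filter_upwards [hμ.ae_sq_evolvedSpin t] with p hp
    rw [Real.norm_eq_abs, ← sq_le_one_iff_abs_le_one, hp i]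

lemma integral_evolvedSpin (hμ : IsKacMeasure μ m₀ m₁) (t : ℕ) (i : ℤ) :
    ∫ p, evolvedSpin t i p ∂μ = m₀ * (1 - 2 * m₁) ^ t := by
  simpa [evolvedSpin] using hμ.integral_prod_spin_mul_prod_scatterSign {i - t} (Ico (i - t) i)

lemma integral_evolvedSpin_mul (hμ : IsKacMeasure μ m₀ m₁) (t : ℕ) {i j : ℤ} (hij : i ≠ j) :
    ∫ p, evolvedSpin t i p * evolvedSpin t j p ∂μ
      = m₀ ^ 2 * (1 - 2 * m₁) ^ (2 * (t - #(Ico (i - t) i ∩ Ico (j - t) j))) := by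
  set A := Ico (i - t) i
  set B := Ico (j - t) j
  have hAB : A ∩ B ⊆ A ∪ B := inter_subset_left.trans subset_union_left
  have hne : i - t ≠ j - t := by omega
  have hae : (fun p => evolvedSpin t i p * evolvedSpin t j p) =ᵐ[μ]
      fun p => (∏ k ∈ {i - t, j - t}, spin k p) * ∏ l ∈ (A ∪ B) \ (A ∩ B), scatterSign l p := by
    filter_upwards [hμ.ae_sq_scatterSign] with p hw
    calc evolvedSpin t i p * evolvedSpin t j p
        = spin (i - t) p * spin (j - t) p
          * ((∏ l ∈ A ∪ B, scatterSign l p) * ∏ l ∈ A ∩ B, scatterSign l p) := by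
          rw [evolvedSpin, evolvedSpin, prod_union_inter]
          ring
      _ = spin (i - t) p * spin (j - t) p * ((∏ l ∈ (A ∪ B) \ (A ∩ B), scatterSign l p)
          * ∏ l ∈ A ∩ B, scatterSign l p ^ 2) := by
          rw [← prod_sdiff hAB, prod_pow]
          ring
      _ = _ := by simp [hw, prod_pair hne]
  have hcard : #((A ∪ B) \ (A ∩ B)) = 2 * (t - #(A ∩ B)) := by
    have hA : #A = t := by simp [A]
    have hB : #B = t := by simp [B]
    have := card_union_add_card_inter A B
    have := card_le_card (inter_subset_left : A ∩ B ⊆ A)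
    rw [card_sdiff_of_subset hAB]
    omega
  rw [integral_congr_ae hae, hμ.integral_prod_spin_mul_prod_scatterSign, card_pair hne, hcard]

lemma covariance_evolvedSpin (hμ : IsKacMeasure μ m₀ m₁) (t : ℕ) {i j : ℤ} (hij : i ≠ j) :
    cov[evolvedSpin t i, evolvedSpin t j; μ]
      = m₀ ^ 2 * ((1 - 2 * m₁) ^ (2 * (t - #(Ico (i - t) i ∩ Ico (j - t) j)))
        - (1 - 2 * m₁) ^ (2 * t)) := by
  rw [covariance_eq_sub (hμ.memLp_evolvedSpin t i) (hμ.memLp_evolvedSpin t j)]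
  simp only [Pi.mul_apply, hμ.integral_evolvedSpin_mul t hij, hμ.integral_evolvedSpin]
  ring

lemma variance_evolvedSpin_le (hμ : IsKacMeasure μ m₀ m₁) (t : ℕ) (i : ℤ) :
    Var[evolvedSpin t i; μ] ≤ 1 := by
  refine (variance_le_expectation_sq (measurable_evolvedSpin t i).aestronglyMeasurable).trans_eq ?_
  have hsq : evolvedSpin t i ^ 2 =ᵐ[μ] fun _ => 1 := (hμ.ae_sq_evolvedSpin t).mono fun p hp => hp i
  rw [integral_congr_ae hsq]
  simp

lemma covariance_evolvedSpin_le (hμ : IsKacMeasure μ m₀ m₁) (t : ℕ) {i j : ℤ} (hij : i ≠ j) :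
    cov[evolvedSpin t i, evolvedSpin t j; μ] ≤ m₀ ^ 2 := by
  have hr : (1 - 2 * m₁) ^ 2 ≤ 1 := by
    rw [sq_le_one_iff_abs_le_one, abs_le]
    constructor <;> linarith [hμ.density_mem.1, hμ.density_mem.2]
  rw [hμ.covariance_evolvedSpin t hij, pow_mul, pow_mul]
  have := pow_le_one₀ (sq_nonneg _) hr (n := t - #(Ico (i - t) i ∩ Ico (j - t) j))
  have := pow_nonneg (sq_nonneg (1 - 2 * m₁)) t
  nlinarith [sq_nonneg m₀]

lemma covariance_evolvedSpin_eq_zero (hμ : IsKacMeasure μ m₀ m₁) (t : ℕ) {i j : ℤ} (hij : i ≠ j)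
    (hfar : (t : ℤ) ≤ |j - i|) : cov[evolvedSpin t i, evolvedSpin t j; μ] = 0 := by
  rw [hμ.covariance_evolvedSpin t hij, disjoint_iff_inter_eq_empty.mp
    (disjoint_Ico_of_le_abs_sub hfar)]
  simp

lemma variance_sum_evolvedSpin_le (hμ : IsKacMeasure μ m₀ m₁) (t : ℕ) (s : Finset ℤ) :
    Var[fun p => ∑ i ∈ s, evolvedSpin t i p; μ] ≤ #s * (1 + 2 * t * m₀ ^ 2) :=
  variance_sum_le_of_covariance_le s (hμ.memLp_evolvedSpin t) (sq_nonneg m₀)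
    (hμ.variance_evolvedSpin_le t) (fun _ _ hij => hμ.covariance_evolvedSpin_le t hij)
    fun _ _ hij hfar => hμ.covariance_evolvedSpin_eq_zero t hij hfar

end IsKacMeasure

theorem variance_magnetization_bound_general (m₀ m₁ : ℝ) (hm₀ : m₀ ∈ Set.Icc (-1 : ℝ) 1)
    (hm₁ : m₁ ∈ Set.Icc (0 : ℝ) 1)
    (μ : Measure ((ℤ → ℤ) × (ℤ → ℤ))) [IsProbabilityMeasure μ]
    (hind : iIndepFun coordFun μ)
    (hx1 : ∀ i : ℤ, μ {p | p.1 i = 1} = ENNReal.ofReal ((1 + m₀) / 2))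
    (hx0 : ∀ i : ℤ, μ {p | p.1 i = 0} = ENNReal.ofReal ((1 - m₀) / 2))
    (hy1 : ∀ i : ℤ, μ {p | p.2 i = 1} = ENNReal.ofReal m₁)
    (hy0 : ∀ i : ℤ, μ {p | p.2 i = 0} = ENNReal.ofReal (1 - m₁))
    (t N : ℕ) :
    variance (fun p => m0Avg N (kacPhi^[t] p)) μ ≤ (1 + 2 * m₀ ^ 2 * t) / (2 * (N : ℝ) + 1) := by
  have hμ : IsKacMeasure μ m₀ m₁ := ⟨hind, hm₀, hm₁, hx1, hx0, hy1, hy0⟩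
  have hcard : (#(Icc (-(N : ℤ)) N) : ℝ) = 2 * N + 1 := by
    rw [Int.card_Icc, show (N : ℤ) + 1 - -(N : ℤ) = ((2 * N + 1 : ℕ) : ℤ) by push_cast; ring,
      Int.toNat_natCast, Nat.cast_add, Nat.cast_mul, Nat.cast_ofNat, Nat.cast_one]
  have havg : (fun p => m0Avg N (kacPhi^[t] p))
      = fun p => (2 * (N : ℝ) + 1)⁻¹ * ∑ i ∈ Icc (-(N : ℤ)) N, evolvedSpin t i p := by
    funext p
    simp only [m0Avg, ← spin_kacPhi_iterate, div_eq_inv_mul]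
    rfl
  rw [havg, variance_const_mul]
  calc (2 * (N : ℝ) + 1)⁻¹ ^ 2 * Var[fun p => ∑ i ∈ Icc (-(N : ℤ)) N, evolvedSpin t i p; μ]
      ≤ (2 * (N : ℝ) + 1)⁻¹ ^ 2 * ((2 * N + 1) * (1 + 2 * t * m₀ ^ 2)) := by
        gcongr
        exact hcard ▸ hμ.variance_sum_evolvedSpin_le t _
    _ = (1 + 2 * m₀ ^ 2 * t) / (2 * (N : ℝ) + 1) := by
        field_simp

/-- under the i.i.d. product Bernoulli measure with spin mean `m₀` and
scatterer density `m₁`, for `0 ≤ t ≤ T` and `T ≤ 2N`, the variance of the block-averaged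
magnetization at time `t` is at most `(1 + 2m₀²t)/(2N+1)`. -/
theorem variance_magnetization_bound (m₀ m₁ : ℝ) (hm₀ : m₀ ∈ Set.Icc (-1 : ℝ) 1)
    (hm₁ : m₁ ∈ Set.Icc (0 : ℝ) 1)
    (μ : Measure ((ℤ → ℤ) × (ℤ → ℤ))) [IsProbabilityMeasure μ]
    (hind : iIndepFun coordFun μ)
    (hx1 : ∀ i : ℤ, μ {p | p.1 i = 1} = ENNReal.ofReal ((1 + m₀) / 2))
    (hx0 : ∀ i : ℤ, μ {p | p.1 i = 0} = ENNReal.ofReal ((1 - m₀) / 2))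
    (hy1 : ∀ i : ℤ, μ {p | p.2 i = 1} = ENNReal.ofReal m₁)
    (hy0 : ∀ i : ℤ, μ {p | p.2 i = 0} = ENNReal.ofReal (1 - m₁))
    (T t N : ℕ) (htT : t ≤ T) (hTN : T ≤ 2 * N) :
    variance (fun p => m0Avg N (kacPhi^[t] p)) μ ≤ (1 + 2 * m₀ ^ 2 * t) / (2 * (N : ℝ) + 1) :=
  variance_magnetization_bound_general m₀ m₁ hm₀ hm₁ μ hind hx1 hx0 hy1 hy0 t N
end

section
/- (Weak law of large numbers for the Kac chain) For every T ∈ ℕ and δ > 0, μ_m( ⋃_{t=0}^{T} ⋃_{i∈{0,1}} { (x,y) : |m_i^N(φ^t(x,y)) − Φ_i^t(m)| > δ } ) → 0 as N → ∞, where Φ(m) = ((1−2m₁)m₀, m₁). -/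
open MeasureTheory ProbabilityTheory Filter

/-- Block-averaged scatterer density. -/
noncomputable def m1Avg (N : ℕ) (p : (ℤ → ℤ) × (ℤ → ℤ)) : ℝ :=
  (∑ i ∈ Finset.Icc (-(N : ℤ)) (N : ℤ), (p.2 i : ℝ)) / (2 * (N : ℝ) + 1)

/-- The macroscopic law `Φ(m₀, m₁) = ((1−2m₁)m₀, m₁)`. -/
def PhiMap (m : ℝ × ℝ) : ℝ × ℝ := ((1 - 2 * m.2) * m.1, m.2)

/-!
In spin variables `σ = 2x - 1` one Kac step is the integer identity `σ'ᵢ = σᵢ₋₁ (1 - 2yᵢ₋₁)`, so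
after `t` steps the spin at `i` is the product of `σ_{i-t}` and of the factors `1 - 2yⱼ`,
`i - t ≤ j < i` (its light cone). Under the product Bernoulli measure these factors are independent
with means `m₀` and `1 - 2m₁`, so the spin has mean `(1 - 2m₁)ᵗ m₀ = (Φᵗ m)₀`, and spins at sites
more than `t` apart are products over disjoint sets of coordinates, hence uncorrelated. For bounded
variables with finite-range correlations the variance of a block sum grows only linearly in the
block length, so Chebyshev's inequality gives the law of large numbers at each time `t`; the
scatterers do not move, and a union bound over `t ≤ T` concludes.
-/

open Finset
open scoped Topology

section Independence

variable {Ω : Type*} [MeasurableSpace Ω] {μ : Measure Ω}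

lemma ProbabilityTheory.iIndepFun.integral_finset_prod_comp {ι β : Type*} [MeasurableSpace β]
    {X : ι → Ω → β} (hX : iIndepFun X μ) (mX : ∀ i, Measurable (X i)) {f : ι → β → ℝ}
    (hf : ∀ i, Measurable (f i)) (s : Finset ι) :
    ∫ ω, ∏ i ∈ s, f i (X i ω) ∂μ = ∏ i ∈ s, ∫ ω, f i (X i ω) ∂μ := by
  calc ∫ ω, ∏ i ∈ s, f i (X i ω) ∂μ = ∫ ω, ∏ i : s, f i (X i ω) ∂μ := by
        congr with ω
        exact (prod_coe_sort s fun i => f i (X i ω)).symm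
    _ = ∏ i : s, ∫ ω, f i (X i ω) ∂μ :=
        (hX.precomp Subtype.val_injective).integral_fun_prod_comp (fun i => (mX i).aemeasurable)
          (fun i => (hf i).aestronglyMeasurable)
    _ = ∏ i ∈ s, ∫ ω, f i (X i ω) ∂μ := prod_coe_sort s fun i => ∫ ω, f i (X i ω) ∂μ

variable [IsProbabilityMeasure μ]

lemma ProbabilityTheory.iIndepFun.covariance_finset_prod_comp_eq_zero {ι β : Type*}
    [MeasurableSpace β] {X : ι → Ω → β} (hX : iIndepFun X μ) (mX : ∀ i, Measurable (X i))
    {f : ι → β → ℝ} (hf : ∀ i, Measurable (f i)) {s t : Finset ι} (hst : Disjoint s t)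
    (hs : MemLp (fun ω => ∏ i ∈ s, f i (X i ω)) 2 μ)
    (ht : MemLp (fun ω => ∏ i ∈ t, f i (X i ω)) 2 μ) :
    cov[fun ω => ∏ i ∈ s, f i (X i ω), fun ω => ∏ i ∈ t, f i (X i ω); μ] = 0 := by
  classical
  have hprod : (fun ω => ∏ i ∈ s, f i (X i ω)) * (fun ω => ∏ i ∈ t, f i (X i ω))
      = fun ω => ∏ i ∈ s ∪ t, f i (X i ω) := by
    ext ω
    simp [prod_union hst]
  rw [covariance_eq_sub hs ht, hprod, hX.integral_finset_prod_comp mX hf,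
    hX.integral_finset_prod_comp mX hf, hX.integral_finset_prod_comp mX hf, prod_union hst,
    sub_self]

lemma covariance_le_two_of_abs_le_one {X Y : Ω → ℝ} (hX : MemLp X 2 μ) (hY : MemLp Y 2 μ)
    (hXb : ∀ᵐ ω ∂μ, |X ω| ≤ 1) (hYb : ∀ᵐ ω ∂μ, |Y ω| ≤ 1) : cov[X, Y; μ] ≤ 2 := by
  have abs_integral_le {Z : Ω → ℝ} (hZ : ∀ᵐ ω ∂μ, |Z ω| ≤ 1) : |μ[Z]| ≤ 1 := by
    simpa using norm_integral_le_of_norm_le_const (μ := μ) (f := Z) (C := 1) (by simpa using hZ)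
  have hXY : ∀ᵐ ω ∂μ, |(X * Y) ω| ≤ 1 := by
    filter_upwards [hXb, hYb] with ω hx hy
    simpa [abs_mul] using mul_le_one₀ hx (abs_nonneg _) hy
  calc cov[X, Y; μ] = μ[X * Y] - μ[X] * μ[Y] := covariance_eq_sub hX hY
    _ ≤ |μ[X * Y]| + |μ[X]| * |μ[Y]| := by
        rw [← abs_mul]
        linarith [le_abs_self (μ[X * Y]), neg_abs_le (μ[X] * μ[Y])]
    _ ≤ 1 + 1 * 1 := by
        gcongr
        exacts [abs_integral_le hXY, abs_integral_le hXb, abs_integral_le hYb]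
    _ = 2 := by norm_num

end Independence

section TwoValued

variable {Ω : Type*} [MeasurableSpace Ω] {μ : Measure Ω} [IsProbabilityMeasure μ]
  {α : Type*} [MeasurableSpace α] [MeasurableSingletonClass α] {f : Ω → α} {a b : α}

lemma ae_eq_or_eq_of_measure_add_eq_one (hf : Measurable f) (hab : a ≠ b)
    (h : μ {ω | f ω = a} + μ {ω | f ω = b} = 1) : ∀ᵐ ω ∂μ, f ω = a ∨ f ω = b := by
  have hA : MeasurableSet {ω | f ω = a} := hf (measurableSet_singleton a)
  have hB : MeasurableSet {ω | f ω = b} := hf (measurableSet_singleton b)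
  have hdisj : Disjoint {ω | f ω = a} {ω | f ω = b} :=
    Set.disjoint_left.mpr fun ω ha hb => hab (ha.symm.trans hb)
  have hcover : μ ({ω | f ω = a} ∪ {ω | f ω = b}) = 1 := by rw [measure_union hdisj hB, h]
  exact ae_iff.mpr ((prob_compl_eq_zero_iff (hA.union hB)).mpr hcover)

lemma integral_comp_of_ae_eq_or_eq (hf : Measurable f) (hab : a ≠ b)
    (h : ∀ᵐ ω ∂μ, f ω = a ∨ f ω = b) (g : α → ℝ) :
    ∫ ω, g (f ω) ∂μ = g a * μ.real {ω | f ω = a} + g b * μ.real {ω | f ω = b} := by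
  have hA : MeasurableSet {ω | f ω = a} := hf (measurableSet_singleton a)
  have hB : MeasurableSet {ω | f ω = b} := hf (measurableSet_singleton b)
  have hsplit : (fun ω => g (f ω)) =ᵐ[μ] fun ω =>
      g a * {ω | f ω = a}.indicator 1 ω + g b * {ω | f ω = b}.indicator 1 ω := by
    filter_upwards [h] with ω hω
    rcases hω with hω | hω <;> simp [Set.indicator, hω, hab, hab.symm]
  rw [integral_congr_ae hsplit, integral_add ((integrable_const _).indicator hA |>.const_mul _)
    ((integrable_const _).indicator hB |>.const_mul _), integral_const_mul, integral_const_mul,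
    integral_indicator_one hA, integral_indicator_one hB]

end TwoValued

section BlockAverage

variable {Ω : Type*} [MeasurableSpace Ω] {μ : Measure Ω} [IsProbabilityMeasure μ]

noncomputable def blockAvg (N : ℕ) (a : ℤ → ℝ) : ℝ :=
  (∑ i ∈ Icc (-(N : ℤ)) N, a i) / (2 * N + 1)

lemma card_Icc_neg_self (N : ℕ) : ((Icc (-(N : ℤ)) N).card : ℝ) = 2 * N + 1 := by
  rw [Int.card_Icc]
  have : (N + 1 - -(N : ℤ)).toNat = 2 * N + 1 := by omega
  rw [this]
  push_cast
  ring

variable {Y : ℤ → Ω → ℝ} {L : ℕ} {C : ℝ}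

lemma card_filter_abs_sub_lt_le (s : Finset ℤ) (i : ℤ) (L : ℕ) :
    (s.filter fun j => |i - j| < L).card ≤ 2 * L + 1 := by
  calc (s.filter fun j => |i - j| < L).card ≤ (Icc (i - L) (i + L)).card := by
        refine card_le_card fun j hj => ?_
        have := abs_lt.mp (mem_filter.mp hj).2
        rw [mem_Icc]
        omega
    _ = 2 * L + 1 := by rw [Int.card_Icc]; omega

lemma variance_sum_le_of_covariance_finiteRange (hY : ∀ i, MemLp (Y i) 2 μ)
    (hC : ∀ i j, cov[Y i, Y j; μ] ≤ C) (hfar : ∀ i j, (L : ℤ) ≤ |i - j| → cov[Y i, Y j; μ] = 0)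
    (s : Finset ℤ) :
    Var[fun ω => ∑ i ∈ s, Y i ω; μ] ≤ s.card * ((2 * L + 1) * C) := by
  have hC0 : 0 ≤ C := (covariance_self (hY 0).aemeasurable ▸ variance_nonneg _ _).trans (hC 0 0)
  rw [variance_fun_sum' fun i _ => hY i, ← nsmul_eq_mul, ← sum_const]
  refine sum_le_sum fun i _ => ?_
  calc ∑ j ∈ s, cov[Y i, Y j; μ] = ∑ j ∈ s.filter fun j => |i - j| < L, cov[Y i, Y j; μ] := by
        refine (sum_filter_of_ne fun j _ hne => ?_).symm
        by_contra h
        exact hne (hfar i j (not_lt.mp h))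
    _ ≤ (s.filter fun j => |i - j| < L).card * C := by
        rw [← nsmul_eq_mul, ← sum_const]
        exact sum_le_sum fun j _ => hC i j
    _ ≤ (2 * L + 1) * C := by
        gcongr
        exact_mod_cast card_filter_abs_sub_lt_le s i L

lemma measure_lt_abs_blockAvg_sub_le (hY : ∀ i, MemLp (Y i) 2 μ) {c : ℝ} (hmean : ∀ i, μ[Y i] = c)
    (hC : ∀ i j, cov[Y i, Y j; μ] ≤ C) (hfar : ∀ i j, (L : ℤ) ≤ |i - j| → cov[Y i, Y j; μ] = 0)
    {δ : ℝ} (hδ : 0 < δ) (N : ℕ) :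
    μ {ω | δ < |blockAvg N (Y · ω) - c|}
      ≤ ENNReal.ofReal ((2 * L + 1) * C / δ ^ 2 / (2 * N + 1)) := by
  set S : Ω → ℝ := fun ω => ∑ i ∈ Icc (-(N : ℤ)) N, Y i ω
  have hn : (0 : ℝ) < 2 * N + 1 := by positivity
  have hS_mean : μ[S] = (2 * N + 1) * c := by
    rw [integral_finsetSum _ fun i _ => (hY i).integrable one_le_two]
    simp only [hmean, sum_const, nsmul_eq_mul, card_Icc_neg_self]
  have hsub : {ω | δ < |blockAvg N (Y · ω) - c|} ⊆ {ω | (2 * N + 1) * δ ≤ |S ω - μ[S]|} := by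
    intro ω hω
    have hrw : S ω - μ[S] = (2 * N + 1) * (blockAvg N (Y · ω) - c) := by
      simp only [S, hS_mean, blockAvg]
      field_simp
    simp only [Set.mem_ofPred_eq, hrw, abs_mul, abs_of_pos hn] at hω ⊢
    exact mul_le_mul_of_nonneg_left hω.le hn.le
  calc μ {ω | δ < |blockAvg N (Y · ω) - c|}
      ≤ ENNReal.ofReal (Var[S; μ] / ((2 * N + 1) * δ) ^ 2) :=
        (measure_mono hsub).trans (meas_ge_le_variance_div_sq (memLp_finsetSum _ fun i _ => hY i)
          (by positivity))
    _ ≤ ENNReal.ofReal ((2 * N + 1) * ((2 * L + 1) * C) / ((2 * N + 1) * δ) ^ 2) := by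
        gcongr
        rw [← card_Icc_neg_self]
        exact variance_sum_le_of_covariance_finiteRange hY hC hfar _
    _ = ENNReal.ofReal ((2 * L + 1) * C / δ ^ 2 / (2 * N + 1)) := by
        congr 1
        field_simp

lemma tendsto_measure_lt_abs_blockAvg_sub (hY : ∀ i, MemLp (Y i) 2 μ) {c : ℝ}
    (hmean : ∀ i, μ[Y i] = c) (hC : ∀ i j, cov[Y i, Y j; μ] ≤ C)
    (hfar : ∀ i j, (L : ℤ) ≤ |i - j| → cov[Y i, Y j; μ] = 0) {δ : ℝ} (hδ : 0 < δ) :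
    Tendsto (fun N : ℕ => μ {ω | δ < |blockAvg N (Y · ω) - c|}) atTop (𝓝 0) := by
  have hbound : Tendsto (fun N : ℕ => (2 * L + 1) * C / δ ^ 2 / (2 * N + 1)) atTop (𝓝 0) :=
    tendsto_const_nhds.div_atTop <| tendsto_atTop_add_const_right _ _ <|
      tendsto_natCast_atTop_atTop.const_mul_atTop two_pos
  refine tendsto_of_tendsto_of_tendsto_of_le_of_le tendsto_const_nhds ?_ (fun _ => zero_le)
    (measure_lt_abs_blockAvg_sub_le hY hmean hC hfar hδ)
  simpa using ENNReal.tendsto_ofReal hbound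

end BlockAverage

section Squeeze

variable {Ω : Type*} [MeasurableSpace Ω] {μ : Measure Ω}

lemma tendsto_measure_union_zero {A B : ℕ → Set Ω} (hA : Tendsto (fun N => μ (A N)) atTop (𝓝 0))
    (hB : Tendsto (fun N => μ (B N)) atTop (𝓝 0)) :
    Tendsto (fun N => μ (A N ∪ B N)) atTop (𝓝 0) :=
  tendsto_of_tendsto_of_tendsto_of_le_of_le tendsto_const_nhds (by simpa using hA.add hB)
    (fun _ => zero_le) (fun _ => measure_union_le _ _)

lemma tendsto_measure_biUnion_finset_zero {ι : Type*} {s : Finset ι} {A : ι → ℕ → Set Ω}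
    (h : ∀ i ∈ s, Tendsto (fun N => μ (A i N)) atTop (𝓝 0)) :
    Tendsto (fun N => μ (⋃ i ∈ s, A i N)) atTop (𝓝 0) :=
  tendsto_of_tendsto_of_tendsto_of_le_of_le tendsto_const_nhds
    (by simpa using tendsto_finsetSum s h) (fun _ => zero_le)
    (fun _ => measure_biUnion_finset_le _ _)

end Squeeze

lemma kacPhi_iterate_snd (t : ℕ) (p : (ℤ → ℤ) × (ℤ → ℤ)) : (kacPhi^[t] p).2 = p.2 := by
  induction t with
  | zero => rfl
  | succ t ih => rw [Function.iterate_succ_apply', ← ih]; rfl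

lemma PhiMap_iterate (m : ℝ × ℝ) (t : ℕ) : PhiMap^[t] m = ((1 - 2 * m.2) ^ t * m.1, m.2) := by
  induction t with
  | zero => simp
  | succ t ih =>
    rw [Function.iterate_succ_apply', ih]
    exact Prod.ext (by simp only [PhiMap]; ring) rfl

lemma two_mul_kacPhi_iterate_fst_sub_one (t : ℕ) (p : (ℤ → ℤ) × (ℤ → ℤ)) (i : ℤ) :
    2 * (kacPhi^[t] p).1 i - 1 =
      (2 * p.1 (i - t) - 1) * ∏ j ∈ Ico (i - t) i, (1 - 2 * p.2 j) := by
  induction t generalizing p with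
  | zero => simp
  | succ t ih =>
    have hIco : Ico (i - (t + 1 : ℕ)) i = insert (i - t - 1) (Ico (i - t) i) := by
      ext j
      simp only [mem_Ico, mem_insert]
      omega
    rw [Function.iterate_succ_apply, ih, hIco, prod_insert (by simp)]
    simp only [kacPhi]
    push_cast
    ring_nf

def kacFactor : ℤ ⊕ ℤ → ℤ → ℝ
  | .inl _, x => 2 * x - 1
  | .inr _, y => 1 - 2 * y

noncomputable def lightCone (t : ℕ) (i : ℤ) : Finset (ℤ ⊕ ℤ) :=
  insert (.inl (i - t)) ((Ico (i - t) i).map Function.Embedding.inr)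

lemma spin_kacPhi_iterate_eq_prod (t : ℕ) (p : (ℤ → ℤ) × (ℤ → ℤ)) (i : ℤ) :
    2 * ((kacPhi^[t] p).1 i : ℝ) - 1 = ∏ κ ∈ lightCone t i, kacFactor κ (coordFun κ p) := by
  rw [lightCone, prod_insert (by simp), prod_map]
  simp only [Function.Embedding.inr_apply, kacFactor, coordFun, Sum.elim_inl, Sum.elim_inr]
  exact_mod_cast two_mul_kacPhi_iterate_fst_sub_one t p i

lemma m0Avg_kacPhi_iterate (N t : ℕ) (p : (ℤ → ℤ) × (ℤ → ℤ)) :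
    m0Avg N (kacPhi^[t] p) =
      blockAvg N fun i => ∏ κ ∈ lightCone t i, kacFactor κ (coordFun κ p) := by
  simp only [m0Avg, blockAvg, spin_kacPhi_iterate_eq_prod]

lemma m1Avg_kacPhi_iterate (N t : ℕ) (p : (ℤ → ℤ) × (ℤ → ℤ)) :
    m1Avg N (kacPhi^[t] p) = blockAvg N fun i => (p.2 i : ℝ) := by
  rw [m1Avg, kacPhi_iterate_snd, blockAvg]

lemma disjoint_lightCone {t : ℕ} {i j : ℤ} (hij : ((t + 1 : ℕ) : ℤ) ≤ |i - j|) :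
    Disjoint (lightCone t i) (lightCone t j) := by
  rw [disjoint_left]
  intro κ hκi hκj
  simp only [lightCone, mem_insert, Finset.mem_map, mem_Ico, Function.Embedding.inr_apply]
    at hκi hκj
  rcases abs_cases (i - j) with ⟨h, _⟩ | ⟨h, _⟩ <;>
  rcases hκi with rfl | ⟨a, ha, rfl⟩ <;> rcases hκj with h' | ⟨b, hb, h'⟩ <;> simp_all <;> omega

lemma measurable_coordFun (κ : ℤ ⊕ ℤ) : Measurable (coordFun κ) := by
  rcases κ with i | i
  · exact (measurable_pi_apply i).comp measurable_fst
  · exact (measurable_pi_apply i).comp measurable_snd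

lemma abs_kacFactor_le_one {κ : ℤ ⊕ ℤ} {z : ℤ} (hz : z = 0 ∨ z = 1) : |kacFactor κ z| ≤ 1 := by
  rcases κ with _ | _ <;> rcases hz with rfl | rfl <;> norm_num [kacFactor]

structure IsKacBernoulli (m₀ m₁ : ℝ) (μ : Measure ((ℤ → ℤ) × (ℤ → ℤ))) : Prop where
  mem_Icc_spin : m₀ ∈ Set.Icc (-1 : ℝ) 1
  mem_Icc_scatterer : m₁ ∈ Set.Icc (0 : ℝ) 1
  indep : iIndepFun coordFun μ
  spin_one : ∀ i : ℤ, μ {p | p.1 i = 1} = ENNReal.ofReal ((1 + m₀) / 2)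
  spin_zero : ∀ i : ℤ, μ {p | p.1 i = 0} = ENNReal.ofReal ((1 - m₀) / 2)
  scatterer_one : ∀ i : ℤ, μ {p | p.2 i = 1} = ENNReal.ofReal m₁
  scatterer_zero : ∀ i : ℤ, μ {p | p.2 i = 0} = ENNReal.ofReal (1 - m₁)

namespace IsKacBernoulli

variable {m₀ m₁ : ℝ} {μ : Measure ((ℤ → ℤ) × (ℤ → ℤ))} [IsProbabilityMeasure μ]

lemma ae_coordFun_eq_zero_or_one (hμ : IsKacBernoulli m₀ m₁ μ) :
    ∀ᵐ p ∂μ, ∀ κ, coordFun κ p = 0 ∨ coordFun κ p = 1 := by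
  obtain ⟨h₀, h₀'⟩ := hμ.mem_Icc_spin
  obtain ⟨h₁, h₁'⟩ := hμ.mem_Icc_scatterer
  rw [ae_all_iff]
  rintro (i | i) <;> refine ae_eq_or_eq_of_measure_add_eq_one (measurable_coordFun _) zero_ne_one ?_
  · change μ {p | p.1 i = 0} + μ {p | p.1 i = 1} = 1
    rw [hμ.spin_zero, hμ.spin_one, ← ENNReal.ofReal_add (by linarith) (by linarith),
      show (1 - m₀) / 2 + (1 + m₀) / 2 = 1 by ring, ENNReal.ofReal_one]
  · change μ {p | p.2 i = 0} + μ {p | p.2 i = 1} = 1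
    rw [hμ.scatterer_zero, hμ.scatterer_one, ← ENNReal.ofReal_add (by linarith) h₁,
      sub_add_cancel, ENNReal.ofReal_one]

lemma integral_comp_fst (hμ : IsKacBernoulli m₀ m₁ μ) (i : ℤ) (g : ℤ → ℝ) :
    ∫ p, g (p.1 i) ∂μ = g 0 * ((1 - m₀) / 2) + g 1 * ((1 + m₀) / 2) := by
  obtain ⟨h₀, h₀'⟩ := hμ.mem_Icc_spin
  rw [integral_comp_of_ae_eq_or_eq (f := fun p => p.1 i) (measurable_coordFun (.inl i))
    zero_ne_one (hμ.ae_coordFun_eq_zero_or_one.mono fun p hp => hp (.inl i)) g]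
  simp only [measureReal_def, hμ.spin_zero, hμ.spin_one]
  rw [ENNReal.toReal_ofReal (by linarith), ENNReal.toReal_ofReal (by linarith)]

lemma integral_comp_snd (hμ : IsKacBernoulli m₀ m₁ μ) (i : ℤ) (g : ℤ → ℝ) :
    ∫ p, g (p.2 i) ∂μ = g 0 * (1 - m₁) + g 1 * m₁ := by
  obtain ⟨h₁, h₁'⟩ := hμ.mem_Icc_scatterer
  rw [integral_comp_of_ae_eq_or_eq (f := fun p => p.2 i) (measurable_coordFun (.inr i))
    zero_ne_one (hμ.ae_coordFun_eq_zero_or_one.mono fun p hp => hp (.inr i)) g]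
  simp only [measureReal_def, hμ.scatterer_zero, hμ.scatterer_one]
  rw [ENNReal.toReal_ofReal (by linarith), ENNReal.toReal_ofReal h₁]

lemma ae_abs_prod_kacFactor_le_one (hμ : IsKacBernoulli m₀ m₁ μ) (s : Finset (ℤ ⊕ ℤ)) :
    ∀ᵐ p ∂μ, |∏ κ ∈ s, kacFactor κ (coordFun κ p)| ≤ 1 := by
  filter_upwards [hμ.ae_coordFun_eq_zero_or_one] with p hp
  rw [abs_prod]
  exact prod_le_one (fun _ _ => abs_nonneg _) fun κ _ => abs_kacFactor_le_one (hp κ)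

lemma memLp_prod_kacFactor (hμ : IsKacBernoulli m₀ m₁ μ) (s : Finset (ℤ ⊕ ℤ)) :
    MemLp (fun p => ∏ κ ∈ s, kacFactor κ (coordFun κ p)) 2 μ :=
  MemLp.of_bound (Finset.measurable_fun_prod s fun κ _ =>
      (measurable_of_countable (kacFactor κ)).comp (measurable_coordFun κ)).aestronglyMeasurable 1
    (by simpa only [Real.norm_eq_abs] using hμ.ae_abs_prod_kacFactor_le_one s)

lemma integral_prod_lightCone (hμ : IsKacBernoulli m₀ m₁ μ) (t : ℕ) (i : ℤ) :
    ∫ p, ∏ κ ∈ lightCone t i, kacFactor κ (coordFun κ p) ∂μ = (1 - 2 * m₁) ^ t * m₀ := by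
  rw [hμ.indep.integral_finset_prod_comp measurable_coordFun (fun _ => measurable_of_countable _),
    lightCone, prod_insert (by simp), prod_map]
  have hspin : ∫ p, kacFactor (.inl (i - t)) (p.1 (i - t)) ∂μ = m₀ := by
    rw [hμ.integral_comp_fst]; simp only [kacFactor]; ring
  have hscat (j : ℤ) : ∫ p, kacFactor (.inr j) (p.2 j) ∂μ = 1 - 2 * m₁ := by
    rw [hμ.integral_comp_snd]; simp only [kacFactor]; ring
  simp only [coordFun, Function.Embedding.inr_apply, Sum.elim_inl, Sum.elim_inr, hspin, hscat,
    prod_const, Int.card_Ico, sub_sub_cancel, Int.toNat_natCast]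
  ring

lemma covariance_prod_lightCone_eq_zero (hμ : IsKacBernoulli m₀ m₁ μ) {t : ℕ} {i j : ℤ}
    (hij : ((t + 1 : ℕ) : ℤ) ≤ |i - j|) :
    cov[fun p => ∏ κ ∈ lightCone t i, kacFactor κ (coordFun κ p),
      fun p => ∏ κ ∈ lightCone t j, kacFactor κ (coordFun κ p); μ] = 0 :=
  hμ.indep.covariance_finset_prod_comp_eq_zero measurable_coordFun
    (fun _ => measurable_of_countable _) (disjoint_lightCone hij)
    (hμ.memLp_prod_kacFactor _) (hμ.memLp_prod_kacFactor _)

lemma tendsto_measure_spin (hμ : IsKacBernoulli m₀ m₁ μ) (t : ℕ) {δ : ℝ} (hδ : 0 < δ) :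
    Tendsto (fun N => μ {p | δ < |blockAvg N (fun i => ∏ κ ∈ lightCone t i,
      kacFactor κ (coordFun κ p)) - (1 - 2 * m₁) ^ t * m₀|}) atTop (𝓝 0) :=
  tendsto_measure_lt_abs_blockAvg_sub (fun _ => hμ.memLp_prod_kacFactor _)
    (hμ.integral_prod_lightCone t)
    (fun _ _ => covariance_le_two_of_abs_le_one (hμ.memLp_prod_kacFactor _)
      (hμ.memLp_prod_kacFactor _) (hμ.ae_abs_prod_kacFactor_le_one _)
      (hμ.ae_abs_prod_kacFactor_le_one _))
    (fun _ _ => hμ.covariance_prod_lightCone_eq_zero) hδ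

lemma ae_abs_snd_le_one (hμ : IsKacBernoulli m₀ m₁ μ) (i : ℤ) :
    ∀ᵐ p ∂μ, |(p.2 i : ℝ)| ≤ 1 := by
  filter_upwards [hμ.ae_coordFun_eq_zero_or_one] with p hp
  have h : p.2 i = 0 ∨ p.2 i = 1 := hp (.inr i)
  rcases h with h | h <;> simp [h]

lemma memLp_snd (hμ : IsKacBernoulli m₀ m₁ μ) (i : ℤ) :
    MemLp (fun p => (p.2 i : ℝ)) 2 μ :=
  MemLp.of_bound ((measurable_of_countable Int.cast).comp
    (measurable_coordFun (.inr i))).aestronglyMeasurable 1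
    (by simpa only [Real.norm_eq_abs] using hμ.ae_abs_snd_le_one i)

lemma covariance_snd_eq_zero (hμ : IsKacBernoulli m₀ m₁ μ) {i j : ℤ} (hij : i ≠ j) :
    cov[fun p => (p.2 i : ℝ), fun p => (p.2 j : ℝ); μ] = 0 :=
  ((hμ.indep.indepFun (Sum.inr_injective.ne hij)).comp (measurable_of_countable Int.cast)
    (measurable_of_countable Int.cast)).covariance_eq_zero (hμ.memLp_snd i) (hμ.memLp_snd j)

lemma tendsto_measure_scatterer (hμ : IsKacBernoulli m₀ m₁ μ) {δ : ℝ} (hδ : 0 < δ) :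
    Tendsto (fun N => μ {p | δ < |blockAvg N (fun i => (p.2 i : ℝ)) - m₁|}) atTop (𝓝 0) :=
  tendsto_measure_lt_abs_blockAvg_sub (L := 1) hμ.memLp_snd
    (fun i => by simpa using hμ.integral_comp_snd i (↑))
    (fun i j => covariance_le_two_of_abs_le_one (hμ.memLp_snd i) (hμ.memLp_snd j)
      (hμ.ae_abs_snd_le_one i) (hμ.ae_abs_snd_le_one j))
    (fun _ _ hij => hμ.covariance_snd_eq_zero (by rintro rfl; simp at hij)) hδ

end IsKacBernoulli

/-- weak law of large numbers for the Kac chain, for the i.i.d. product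
Bernoulli measure with spin mean `m₀` and scatterer density `m₁`. -/
theorem kac_weak_lln (m₀ m₁ : ℝ) (hm₀ : m₀ ∈ Set.Icc (-1 : ℝ) 1)
    (hm₁ : m₁ ∈ Set.Icc (0 : ℝ) 1)
    (μ : Measure ((ℤ → ℤ) × (ℤ → ℤ))) [IsProbabilityMeasure μ]
    (hind : iIndepFun coordFun μ)
    (hx1 : ∀ i : ℤ, μ {p | p.1 i = 1} = ENNReal.ofReal ((1 + m₀) / 2))
    (hx0 : ∀ i : ℤ, μ {p | p.1 i = 0} = ENNReal.ofReal ((1 - m₀) / 2))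
    (hy1 : ∀ i : ℤ, μ {p | p.2 i = 1} = ENNReal.ofReal m₁)
    (hy0 : ∀ i : ℤ, μ {p | p.2 i = 0} = ENNReal.ofReal (1 - m₁))
    (T : ℕ) (δ : ℝ) (hδ : 0 < δ) :
    Tendsto (fun N : ℕ =>
        μ {p | ∃ t ≤ T,
            |m0Avg N (kacPhi^[t] p) - (PhiMap^[t] (m₀, m₁)).1| > δ ∨
            |m1Avg N (kacPhi^[t] p) - (PhiMap^[t] (m₀, m₁)).2| > δ})
      atTop (nhds 0) := by
  have hμ : IsKacBernoulli m₀ m₁ μ := ⟨hm₀, hm₁, hind, hx1, hx0, hy1, hy0⟩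
  refine tendsto_of_tendsto_of_tendsto_of_le_of_le tendsto_const_nhds
    (tendsto_measure_biUnion_finset_zero (s := range (T + 1)) fun t _ =>
      tendsto_measure_union_zero (hμ.tendsto_measure_spin t hδ) (hμ.tendsto_measure_scatterer hδ))
    (fun _ => zero_le) fun N => measure_mono ?_
  rintro p ⟨t, ht, hp⟩
  simp only [m0Avg_kacPhi_iterate, m1Avg_kacPhi_iterate, PhiMap_iterate] at hp
  exact Set.mem_biUnion (mem_range.mpr (Nat.lt_succ_of_le ht)) hp
end

section
/- The time-reversal map π on {0,1}^ℤ × {0,1}^ℤ, defined by π(x,y)(i) = (x(−i), y(−i−1)), is an involution (π ∘ π = id), and it conjugates the Kac dynamics to its inverse: π ∘ φ = φ⁻¹ ∘ π. -/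
/-- The inverse Kac dynamics. -/
def kacPhiInv (p : (ℤ → ℤ) × (ℤ → ℤ)) : (ℤ → ℤ) × (ℤ → ℤ) :=
  (fun i => p.1 (i + 1) + p.2 i - 2 * p.1 (i + 1) * p.2 i, p.2)

/-- The time-reversal map `π(x,y)(i) = (x(−i), y(−i−1))`. -/
def kacRev (p : (ℤ → ℤ) × (ℤ → ℤ)) : (ℤ → ℤ) × (ℤ → ℤ) :=
  (fun i => p.1 (-i), fun i => p.2 (-i - 1))

theorem kacRev_kacRev (p : (ℤ → ℤ) × (ℤ → ℤ)) : kacRev (kacRev p) = p := by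
  ext i <;> simp [kacRev]

theorem kacRev_kacPhi (p : (ℤ → ℤ) × (ℤ → ℤ)) : kacRev (kacPhi p) = kacPhiInv (kacRev p) := by
  ext i <;> simp only [kacRev, kacPhi, kacPhiInv, neg_add']

/-- π is an involution and conjugates φ to its inverse: π∘φ = φ⁻¹∘π. -/
theorem kacRev_involution_and_conjugation :
    (kacRev ∘ kacRev = id) ∧ (kacRev ∘ kacPhi = kacPhiInv ∘ kacRev) :=
  ⟨funext kacRev_kacRev, funext kacRev_kacPhi⟩
end
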